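/- arXiv:2109.12653 — 5 statements merged into one kernel-verified Lean document; each statement's English description precedes it below -/
import Mathlib

section
/- Let u, v ∈ W^{s,p}_0(Ω) with u ≥ 0 and v ≥ 0 a.e. in ℝ^N, let t ∈ [0,1], and set w_t = ((1−t)u^p + t v^p)^{1/p}. Then w_t ∈ W^{s,p}_0(Ω) and ‖w_t‖^p ≤ (1−t)‖u‖^p + t‖v‖^p. -/
open MeasureTheory ENNReal Filter Topology Metric

noncomputable section

abbrev EN (N : ℕ) := EuclideanSpace ℝ (Fin N)

/-- The `p`-th power of the Gagliardo seminorm, as an extended nonneg real. -/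
def gagP (N : ℕ) (s p : ℝ) (u : EN N → ℝ) : ℝ≥0∞ :=
  ∫⁻ z : EN N × EN N, ENNReal.ofReal (|u z.1 - u z.2| ^ p / ‖z.1 - z.2‖ ^ ((N : ℝ) + p * s))

/-- `‖u‖^p = [u]_{s,p}^p`, as a real number. -/
def energyP (N : ℕ) (s p : ℝ) (u : EN N → ℝ) : ℝ := (gagP N s p u).toReal

/-- Membership in `W^{s,p}_0(Ω)`. -/
def memW (N : ℕ) (s p : ℝ) (Ω : Set (EN N)) (u : EN N → ℝ) : Prop :=
  MemLp u (ENNReal.ofReal p) volume ∧ gagP N s p u < ⊤ ∧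
    ∀ᵐ x : EN N, x ∉ Ω → u x = 0

/-- The weight class `𝒲_{s,p}`. -/
def memWeight (N : ℕ) (s p : ℝ) (Ω : Set (EN N)) (m : EN N → ℝ) : Prop :=
  MemLp m (ENNReal.ofReal ((N : ℝ) / (p * s))) (volume.restrict Ω) ∧
    0 < volume {x ∈ Ω | 0 < m x}

/-- The weighted sphere `𝒮_{s,p}(m)`. -/
def sphereW (N : ℕ) (s p : ℝ) (Ω : Set (EN N)) (m : EN N → ℝ) (u : EN N → ℝ) : Prop :=
  memW N s p Ω u ∧ ∫ x in Ω, m x * |u x| ^ p = 1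

/-- The first eigenvalue `λ₁(m)`. -/
def lambda1 (N : ℕ) (s p : ℝ) (Ω : Set (EN N)) (m : EN N → ℝ) : ℝ :=
  sInf {t | ∃ u, sphereW N s p Ω m u ∧ t = energyP N s p u}

/-- `u` is a `λ`-eigenfunction of the weighted fractional `p`-Laplacian Dirichlet problem. -/
def isEigenfunc (N : ℕ) (s p : ℝ) (Ω : Set (EN N)) (m : EN N → ℝ) (lam : ℝ)
    (u : EN N → ℝ) : Prop :=
  memW N s p Ω u ∧ ¬ (u =ᵐ[volume] (0 : EN N → ℝ)) ∧
    ∀ v : EN N → ℝ, memW N s p Ω v →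
      (∫ z : EN N × EN N,
          |u z.1 - u z.2| ^ (p - 2) * (u z.1 - u z.2) * (v z.1 - v z.2) /
            ‖z.1 - z.2‖ ^ ((N : ℝ) + p * s))
        = lam * ∫ x in Ω, m x * |u x| ^ (p - 2) * u x * v x

/-- `λ` is an eigenvalue. -/
def isEigen (N : ℕ) (s p : ℝ) (Ω : Set (EN N)) (m : EN N → ℝ) (lam : ℝ) : Prop :=
  ∃ u, isEigenfunc N s p Ω m lam u

/-- Continuity of a map from the circle `S¹ ⊂ ℝ²` into `W^{s,p}_0(Ω)` w.r.t. the norm. -/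
def contW (N : ℕ) (s p : ℝ) (f : sphere (0 : EuclideanSpace ℝ (Fin 2)) 1 → EN N → ℝ) : Prop :=
  ∀ ω, ∀ ε > (0 : ℝ), ∃ δ > (0 : ℝ), ∀ ω',
    dist ω' ω < δ → energyP N s p (fun x => f ω' x - f ω x) < ε

/-- The mountain-pass type value `λ̃₂(m)`. -/
def lambdaTilde2 (N : ℕ) (s p : ℝ) (Ω : Set (EN N)) (m : EN N → ℝ) : ℝ :=
  sInf {t | ∃ f : sphere (0 : EuclideanSpace ℝ (Fin 2)) 1 → EN N → ℝ,
    (∀ ω, sphereW N s p Ω m (f ω)) ∧ contW N s p f ∧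
    (∀ ω, f (-ω) = fun x => -(f ω x)) ∧
    t = sSup (Set.range fun ω => energyP N s p (f ω))}

private lemma rpow_one_div_pow {x p : ℝ} (hx : 0 ≤ x) (hp : p ≠ 0) :
    (x ^ (1/p)) ^ p = x := by
  rw [one_div, Real.rpow_inv_rpow hx hp]

private lemma tri (p : ℝ) (hp : 1 < p) (t : ℝ) (ht0 : 0 ≤ t) (ht1 : t ≤ 1)
    (x y x' y' : ℝ) :
    ((1-t)*|x+x'|^p + t*|y+y'|^p)^(1/p)
      ≤ ((1-t)*|x|^p + t*|y|^p)^(1/p) + ((1-t)*|x'|^p + t*|y'|^p)^(1/p) := by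
  have h1t : (0:ℝ) ≤ 1 - t := by linarith
  have hp0 : p ≠ 0 := by positivity
  have key := Real.Lp_add_le (Finset.univ : Finset (Fin 2))
    (![(1-t)^(1/p)*x, t^(1/p)*y]) (![(1-t)^(1/p)*x', t^(1/p)*y']) hp.le
  have habs : ∀ c z : ℝ, 0 ≤ c → |c^(1/p)*z|^p = c*|z|^p := by
    intro c z hc
    rw [abs_mul, Real.mul_rpow (abs_nonneg _) (abs_nonneg _),
      abs_of_nonneg (Real.rpow_nonneg hc _), rpow_one_div_pow hc hp0]
  simp only [Fin.sum_univ_two, Matrix.cons_val_zero, Matrix.cons_val_one, Matrix.head_cons,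
    ← mul_add] at key
  simpa only [fun z => habs (1-t) z h1t, fun z => habs t z ht0] using key

private lemma hiddenConv (p : ℝ) (hp : 1 < p) (t : ℝ) (ht0 : 0 ≤ t) (ht1 : t ≤ 1)
    {a b c d : ℝ} (ha : 0 ≤ a) (hb : 0 ≤ b) (hc : 0 ≤ c) (hd : 0 ≤ d) :
    |((1-t)*a^p + t*b^p)^(1/p) - ((1-t)*c^p + t*d^p)^(1/p)| ^ p
      ≤ (1-t)*|a-c|^p + t*|b-d|^p := by
  have h1t : (0:ℝ) ≤ 1 - t := by linarith
  have hp0 : p ≠ 0 := by positivity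
  have h1 := tri p hp t ht0 ht1 (a-c) (b-d) c d
  have h2 := tri p hp t ht0 ht1 (c-a) (d-b) a b
  rw [sub_add_cancel, sub_add_cancel, abs_of_nonneg hc, abs_of_nonneg hd,
    abs_of_nonneg ha, abs_of_nonneg hb] at h1
  rw [sub_add_cancel, sub_add_cancel, abs_of_nonneg hc, abs_of_nonneg hd,
    abs_of_nonneg ha, abs_of_nonneg hb, abs_sub_comm c a, abs_sub_comm d b] at h2
  have habs : |((1-t)*a^p + t*b^p)^(1/p) - ((1-t)*c^p + t*d^p)^(1/p)|
      ≤ ((1-t)*|a-c|^p + t*|b-d|^p)^(1/p) :=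
    abs_sub_le_iff.mpr ⟨by linarith, by linarith⟩
  calc |((1-t)*a^p + t*b^p)^(1/p) - ((1-t)*c^p + t*d^p)^(1/p)| ^ p
      ≤ (((1-t)*|a-c|^p + t*|b-d|^p)^(1/p)) ^ p :=
        Real.rpow_le_rpow (abs_nonneg _) habs (by positivity)
    _ = (1-t)*|a-c|^p + t*|b-d|^p := rpow_one_div_pow (by positivity) hp0

theorem stmt4 (N : ℕ) (hN : 2 ≤ N) (s p : ℝ) (hp : 1 < p) (hs0 : 0 < s) (hs1 : s < 1)
    (hps : p * s < N) (Ω : Set (EN N)) (hΩo : IsOpen Ω) (hΩb : Bornology.IsBounded Ω)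
    (u v : EN N → ℝ) (hu : memW N s p Ω u) (hv : memW N s p Ω v)
    (hu0 : ∀ᵐ x : EN N, 0 ≤ u x) (hv0 : ∀ᵐ x : EN N, 0 ≤ v x)
    (t : ℝ) (ht0 : 0 ≤ t) (ht1 : t ≤ 1) :
    memW N s p Ω (fun x => ((1 - t) * (u x) ^ p + t * (v x) ^ p) ^ (1 / p)) ∧
      energyP N s p (fun x => ((1 - t) * (u x) ^ p + t * (v x) ^ p) ^ (1 / p)) ≤
        (1 - t) * energyP N s p u + t * energyP N s p v := by
  have hp0 : p ≠ 0 := by positivity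
  have hppos : (0:ℝ) < p := by linarith
  have h1t : (0:ℝ) ≤ 1 - t := by linarith
  set w : EN N → ℝ := fun x => ((1 - t) * (u x) ^ p + t * (v x) ^ p) ^ (1 / p) with hw
  have hum : AEMeasurable u volume := hu.1.aestronglyMeasurable.aemeasurable
  have hvm : AEMeasurable v volume := hv.1.aestronglyMeasurable.aemeasurable
  have hrpowc : ∀ q : ℝ, 0 ≤ q → Continuous (fun x : ℝ => x ^ q) := fun q hq =>
    Real.continuous_rpow_const hq
  have hwm : AEMeasurable w volume := by
    refine ((hrpowc (1/p) (by positivity)).measurable.comp_aemeasurable ?_)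
    exact (((hrpowc p hppos.le).measurable.comp_aemeasurable hum).const_mul _).add
      (((hrpowc p hppos.le).measurable.comp_aemeasurable hvm).const_mul _)
  -- pull back a.e. nonnegativity to the product
  have qf : Measure.QuasiMeasurePreserving (Prod.fst : EN N × EN N → EN N) volume volume := by
    rw [Measure.volume_eq_prod]; exact Measure.quasiMeasurePreserving_fst
  have qs : Measure.QuasiMeasurePreserving (Prod.snd : EN N × EN N → EN N) volume volume := by
    rw [Measure.volume_eq_prod]; exact Measure.quasiMeasurePreserving_snd
  have hu0f : ∀ᵐ z : EN N × EN N, 0 ≤ u z.1 := qf.tendsto_ae.eventually hu0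
  have hu0s : ∀ᵐ z : EN N × EN N, 0 ≤ u z.2 := qs.tendsto_ae.eventually hu0
  have hv0f : ∀ᵐ z : EN N × EN N, 0 ≤ v z.1 := qf.tendsto_ae.eventually hv0
  have hv0s : ∀ᵐ z : EN N × EN N, 0 ≤ v z.2 := qs.tendsto_ae.eventually hv0
  -- measurability of the integrands on the product
  have hD : Measurable (fun z : EN N × EN N => ‖z.1 - z.2‖ ^ ((N:ℝ) + p * s)) :=
    (hrpowc _ (by positivity)).measurable.comp (measurable_fst.sub measurable_snd).norm
  have hInt : ∀ f : EN N → ℝ, AEMeasurable f volume →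
      AEMeasurable (fun z : EN N × EN N =>
        ENNReal.ofReal (|f z.1 - f z.2| ^ p / ‖z.1 - z.2‖ ^ ((N:ℝ) + p * s))) volume := by
    intro f hf
    have h1 : AEMeasurable (fun z : EN N × EN N => f z.1) volume :=
      hf.comp_quasiMeasurePreserving qf
    have h2 : AEMeasurable (fun z : EN N × EN N => f z.2) volume :=
      hf.comp_quasiMeasurePreserving qs
    exact ENNReal.measurable_ofReal.comp_aemeasurable
      (((hrpowc p hppos.le).measurable.comp_aemeasurable
        (continuous_abs.measurable.comp_aemeasurable (h1.sub h2))).div hD.aemeasurable)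
  -- key pointwise bound
  have hptwise : ∀ᵐ z : EN N × EN N,
      ENNReal.ofReal (|w z.1 - w z.2| ^ p / ‖z.1 - z.2‖ ^ ((N:ℝ) + p * s))
        ≤ ENNReal.ofReal (1-t) *
            ENNReal.ofReal (|u z.1 - u z.2| ^ p / ‖z.1 - z.2‖ ^ ((N:ℝ) + p * s))
          + ENNReal.ofReal t *
            ENNReal.ofReal (|v z.1 - v z.2| ^ p / ‖z.1 - z.2‖ ^ ((N:ℝ) + p * s)) := by
    filter_upwards [hu0f, hu0s, hv0f, hv0s] with z h1 h2 h3 h4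
    have hkey := hiddenConv p hp t ht0 ht1 h1 h3 h2 h4
    have hDnn : (0:ℝ) ≤ (‖z.1 - z.2‖ ^ ((N:ℝ) + p * s))⁻¹ := by positivity
    calc ENNReal.ofReal (|w z.1 - w z.2| ^ p / ‖z.1 - z.2‖ ^ ((N:ℝ) + p * s))
        ≤ ENNReal.ofReal (((1-t) * |u z.1 - u z.2| ^ p + t * |v z.1 - v z.2| ^ p)
            / ‖z.1 - z.2‖ ^ ((N:ℝ) + p * s)) := by
          apply ENNReal.ofReal_le_ofReal
          rw [div_eq_mul_inv, div_eq_mul_inv]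
          exact mul_le_mul_of_nonneg_right hkey hDnn
      _ = _ := by
          rw [add_div, ENNReal.ofReal_add (by positivity) (by positivity),
            mul_div_assoc, ENNReal.ofReal_mul h1t, mul_div_assoc, ENNReal.ofReal_mul ht0]
  have hgag : gagP N s p w ≤
      ENNReal.ofReal (1-t) * gagP N s p u + ENNReal.ofReal t * gagP N s p v := by
    calc gagP N s p w
        ≤ ∫⁻ z : EN N × EN N, (ENNReal.ofReal (1-t) *
              ENNReal.ofReal (|u z.1 - u z.2| ^ p / ‖z.1 - z.2‖ ^ ((N:ℝ) + p * s))
            + ENNReal.ofReal t *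
              ENNReal.ofReal (|v z.1 - v z.2| ^ p / ‖z.1 - z.2‖ ^ ((N:ℝ) + p * s))) :=
          lintegral_mono_ae hptwise
      _ = _ := by
          rw [lintegral_add_left' ((hInt u hum).const_mul _),
            lintegral_const_mul' _ _ ENNReal.ofReal_ne_top,
            lintegral_const_mul' _ _ ENNReal.ofReal_ne_top]
          rfl
  have hne1 : ENNReal.ofReal (1-t) * gagP N s p u ≠ ⊤ :=
    ENNReal.mul_ne_top ENNReal.ofReal_ne_top hu.2.1.ne
  have hne2 : ENNReal.ofReal t * gagP N s p v ≠ ⊤ :=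
    ENNReal.mul_ne_top ENNReal.ofReal_ne_top hv.2.1.ne
  have hfinW : gagP N s p w < ⊤ :=
    lt_of_le_of_lt hgag (lt_top_iff_ne_top.mpr (ENNReal.add_ne_top.mpr ⟨hne1, hne2⟩))
  have hmem : MemLp w (ENNReal.ofReal p) volume := by
    refine MemLp.of_le (hu.1.norm.add hv.1.norm) hwm.aestronglyMeasurable ?_
    filter_upwards [hu0, hv0] with x hx1 hx2
    have hbase : (0:ℝ) ≤ (1-t) * (u x) ^ p + t * (v x) ^ p := by positivity
    have hwnn : 0 ≤ w x := Real.rpow_nonneg hbase _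
    have hbound : w x ≤ u x + v x := by
      have hu1 : (u x) ^ p ≤ (u x + v x) ^ p :=
        Real.rpow_le_rpow hx1 (by linarith) hppos.le
      have hv1 : (v x) ^ p ≤ (u x + v x) ^ p :=
        Real.rpow_le_rpow hx2 (by linarith) hppos.le
      have h2 : (1-t) * (u x) ^ p + t * (v x) ^ p ≤ (u x + v x) ^ p := by
        nlinarith [mul_le_mul_of_nonneg_left hu1 h1t, mul_le_mul_of_nonneg_left hv1 ht0]
      calc w x ≤ ((u x + v x) ^ p) ^ (1/p) :=
            Real.rpow_le_rpow hbase h2 (by positivity)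
        _ = u x + v x := by rw [one_div, Real.rpow_rpow_inv (by linarith) hp0]
    have hn : ‖w x‖ = w x := Real.norm_of_nonneg hwnn
    rw [hn]
    simp only [Pi.add_apply, Real.norm_eq_abs, abs_of_nonneg hx1, abs_of_nonneg hx2]
    rw [abs_of_nonneg (by linarith : (0:ℝ) ≤ u x + v x)]
    exact hbound
  have hvanish : ∀ᵐ x : EN N, x ∉ Ω → w x = 0 := by
    filter_upwards [hu.2.2, hv.2.2] with x h1 h2 hx
    simp only [hw]
    rw [h1 hx, h2 hx, Real.zero_rpow hp0, mul_zero, mul_zero, add_zero,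
      Real.zero_rpow (by positivity : (1:ℝ)/p ≠ 0)]
  refine ⟨⟨hmem, hfinW, hvanish⟩, ?_⟩
  have hmono := ENNReal.toReal_mono (ENNReal.add_ne_top.mpr ⟨hne1, hne2⟩) hgag
  rwa [ENNReal.toReal_add hne1 hne2, ENNReal.toReal_mul, ENNReal.toReal_mul,
    ENNReal.toReal_ofReal h1t, ENNReal.toReal_ofReal ht0] at hmono
end
end

section
/- Let m ∈ 𝒲_{s,p} and let λ > 0 be an eigenvalue of the weighted fractional p-Laplacian Dirichlet problem. Then λ ≥ λ₁(m); that is, λ₁(m) is the smallest positive eigenvalue. -/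
open MeasureTheory ENNReal Filter Topology Metric

noncomputable section

lemma aux_pow (p : ℝ) (hp : 1 < p) (a : ℝ) : |a| ^ (p - 2) * a * a = |a| ^ p := by
  rcases eq_or_ne a 0 with rfl | ha
  · simp [Real.zero_rpow (by positivity : p ≠ 0)]
  · have h0 : 0 < |a| := abs_pos.2 ha
    have h2 : a * a = |a| ^ (2:ℝ) := by
      rw [show (2:ℝ) = ((2:ℕ):ℝ) by norm_num, Real.rpow_natCast, pow_two, abs_mul_abs_self]
    rw [mul_assoc, h2, ← Real.rpow_add h0]
    norm_num

theorem stmt6 (N : ℕ) (hN : 2 ≤ N) (s p : ℝ) (hp : 1 < p) (hs0 : 0 < s) (hs1 : s < 1)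
    (hps : p * s < N) (Ω : Set (EN N)) (hΩo : IsOpen Ω) (hΩb : Bornology.IsBounded Ω)
    (m : EN N → ℝ) (hm : memWeight N s p Ω m)
    (lam : ℝ) (hlam : 0 < lam) (he : isEigen N s p Ω m lam) :
    lambda1 N s p Ω m ≤ lam := by
  classical
  obtain ⟨u, ⟨huLp, hufin, hu0⟩, hune, heq⟩ := he
  have hp0 : (0:ℝ) < p := lt_trans one_pos hp
  set F : EN N × EN N → ℝ :=
    fun z => |u z.1 - u z.2| ^ p / ‖z.1 - z.2‖ ^ ((N : ℝ) + p * s) with hFdef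
  have hFnn : ∀ z, 0 ≤ F z := fun z =>
    div_nonneg (Real.rpow_nonneg (abs_nonneg _) _) (Real.rpow_nonneg (norm_nonneg _) _)
  -- a.e. measurability of F
  obtain ⟨g, hg, hueq⟩ := huLp.1.aemeasurable
  have e1 : (fun z : EN N × EN N => u z.1) =ᵐ[volume] fun z => g z.1 := by
    rw [Measure.volume_eq_prod]
    exact Measure.quasiMeasurePreserving_fst.ae_eq_comp hueq
  have e2 : (fun z : EN N × EN N => u z.2) =ᵐ[volume] fun z => g z.2 := by
    rw [Measure.volume_eq_prod]
    exact Measure.quasiMeasurePreserving_snd.ae_eq_comp hueq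
  have hFm : AEMeasurable F volume := by
    have hG : Measurable (fun z : EN N × EN N =>
        |g z.1 - g z.2| ^ p / ‖z.1 - z.2‖ ^ ((N : ℝ) + p * s)) := by fun_prop
    refine hG.aemeasurable.congr ?_
    filter_upwards [e1, e2] with z hz1 hz2
    simp only [hFdef, hz1, hz2]
  -- the eigen-equation tested with v = u
  have heqU := heq u ⟨huLp, hufin, hu0⟩
  have hL : (∫ z : EN N × EN N,
      |u z.1 - u z.2| ^ (p - 2) * (u z.1 - u z.2) * (u z.1 - u z.2) /
        ‖z.1 - z.2‖ ^ ((N : ℝ) + p * s)) = ∫ z : EN N × EN N, F z := by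
    congr 1; funext z
    simp only [hFdef]
    rw [aux_pow p hp]
  have hR : (∫ x in Ω, m x * |u x| ^ (p - 2) * u x * u x)
      = ∫ x in Ω, m x * |u x| ^ p := by
    congr 1; funext x
    rw [show m x * |u x| ^ (p - 2) * u x * u x
        = m x * (|u x| ^ (p - 2) * u x * u x) by ring, aux_pow p hp]
  have hIntF : ∫ z : EN N × EN N, F z = energyP N s p u := by
    rw [integral_eq_lintegral_of_nonneg_ae (ae_of_all _ hFnn)
      (aestronglyMeasurable_iff_aemeasurable.2 hFm)]
    rfl
  set I : ℝ := ∫ x in Ω, m x * |u x| ^ p with hIdef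
  have hmain : energyP N s p u = lam * I := by
    rw [← hIntF, ← hL, heqU, hR]
  -- μ ≠ 0
  have hne0 : (volume : Measure (EN N)) ≠ 0 := by
    intro h
    have := hm.2
    rw [h] at this
    simp at this
  haveI : (ae (volume : Measure (EN N))).NeBot := ae_neBot.2 hne0
  -- Ωᶜ is not null
  obtain ⟨r, hr⟩ := hΩb.subset_closedBall 0
  haveI : Nonempty (Fin N) := ⟨⟨0, by omega⟩⟩
  haveI : Nontrivial (EN N) := inferInstance
  obtain ⟨x₁, hx₁⟩ := exists_norm_eq (EN N) (by positivity : (0:ℝ) ≤ max r 0 + 2)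
  have hball : Metric.ball x₁ 1 ⊆ Ωᶜ := by
    intro y hy
    simp only [Metric.mem_ball] at hy
    intro hyΩ
    have h1 : ‖y‖ ≤ r := by simpa [Metric.mem_closedBall] using hr hyΩ
    have h2 : ‖x₁‖ - ‖y‖ ≤ ‖y - x₁‖ := by
      have := norm_sub_norm_le x₁ y
      rw [norm_sub_rev] at this
      linarith
    have h3 : ‖y - x₁‖ < 1 := by simpa [dist_eq_norm] using hy
    have h4 : r ≤ max r 0 := le_max_left _ _
    linarith [hx₁ ▸ h2]
  have hcne : volume Ωᶜ ≠ 0 := by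
    intro h
    have := measure_mono_null hball h
    exact absurd this (Metric.measure_ball_pos volume x₁ one_pos).ne'
  -- Positivity of I
  have hIpos : 0 < I := by
    by_contra hI
    push_neg at hI
    have hE0 : energyP N s p u = 0 :=
      le_antisymm (hmain ▸ mul_nonpos_of_nonneg_of_nonpos hlam.le hI) ENNReal.toReal_nonneg
    have hg0 : gagP N s p u = 0 := by
      rcases (ENNReal.toReal_eq_zero_iff _).1 hE0 with h | h
      · exact h
      · exact absurd h hufin.ne
    have hF0 : (fun z : EN N × EN N => ENNReal.ofReal (F z)) =ᵐ[volume] 0 :=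
      (lintegral_eq_zero_iff' (ENNReal.measurable_ofReal.comp_aemeasurable hFm)).1 hg0
    have hdiag : ∀ᵐ z : EN N × EN N, z.1 ≠ z.2 := by
      rw [Measure.volume_eq_prod, ae_iff]
      have hms : MeasurableSet {z : EN N × EN N | ¬ z.1 ≠ z.2} := by
        simpa using measurableSet_eq_fun (measurable_fst) (measurable_snd)
      rw [Measure.prod_apply hms]
      have : ∀ x : EN N, (volume (Prod.mk x ⁻¹' {z : EN N × EN N | ¬ z.1 ≠ z.2})) = 0 := by
        intro x
        have : Prod.mk x ⁻¹' {z : EN N × EN N | ¬ z.1 ≠ z.2} = {x} := by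
          ext y; simp [eq_comm]
        rw [this]
        exact measure_singleton x
      simp [this]
    have huv : ∀ᵐ z : EN N × EN N, u z.1 = u z.2 := by
      filter_upwards [hF0, hdiag] with z h1 h2
      simp only [Pi.zero_apply] at h1
      rw [ENNReal.ofReal_eq_zero] at h1
      have hFz : F z = 0 := le_antisymm h1 (hFnn z)
      have hden : (0:ℝ) < ‖z.1 - z.2‖ ^ ((N : ℝ) + p * s) :=
        Real.rpow_pos_of_pos (by simpa [sub_eq_zero] using h2) _
      have hnum : |u z.1 - u z.2| ^ p = 0 := by
        have := hFz
        simp only [hFdef] at this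
        rcases div_eq_zero_iff.1 this with h | h
        · exact h
        · exact absurd h hden.ne'
      have := (Real.rpow_eq_zero (abs_nonneg _) hp0.ne').1 hnum
      rw [abs_eq_zero, sub_eq_zero] at this
      exact this
    rw [Measure.volume_eq_prod] at huv
    have hae := Measure.ae_ae_of_ae_prod huv
    obtain ⟨x₀, hx₀⟩ := hae.exists
    have hgood : ∀ᵐ y : EN N, u x₀ = u y ∧ (y ∉ Ω → u y = 0) := hx₀.and hu0
    rw [ae_iff] at hgood
    have hex : ∃ y ∈ Ωᶜ, u x₀ = u y ∧ (y ∉ Ω → u y = 0) := by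
      by_contra hcon
      exact hcne (measure_mono_null (fun y hy hP => hcon ⟨y, hy, hP⟩) hgood)
    obtain ⟨y₀, hy₀, hy₁, hy₂⟩ := hex
    have hux₀ : u x₀ = 0 := by rw [hy₁]; exact hy₂ hy₀
    exact hune (by filter_upwards [hx₀] with y hy; rw [← hy, hux₀]; rfl)
  -- normalization
  set c : ℝ := (I⁻¹) ^ (1/p) with hcdef
  have hIinv : (0:ℝ) < I⁻¹ := inv_pos.2 hIpos
  have hc : 0 < c := Real.rpow_pos_of_pos hIinv _
  have hcp : c ^ p = I⁻¹ := by
    rw [hcdef, ← Real.rpow_mul hIinv.le, one_div, inv_mul_cancel₀ hp0.ne', Real.rpow_one]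
  set w : EN N → ℝ := fun x => c * u x with hwdef
  have hptw : ∀ a b : ℝ, |c * a - c * b| ^ p = c ^ p * |a - b| ^ p := by
    intro a b
    rw [← mul_sub, abs_mul, abs_of_pos hc, Real.mul_rpow hc.le (abs_nonneg _)]
  have hgw : gagP N s p w = ENNReal.ofReal (c ^ p) * gagP N s p u := by
    unfold gagP
    rw [← lintegral_const_mul' _ _ ENNReal.ofReal_ne_top]
    apply lintegral_congr
    intro z
    rw [← ENNReal.ofReal_mul (by positivity)]
    congr 1
    show |c * u z.1 - c * u z.2| ^ p / ‖z.1 - z.2‖ ^ ((N : ℝ) + p * s) = _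
    rw [hptw, mul_div_assoc]
  have hwW : memW N s p Ω w := by
    refine ⟨huLp.const_mul c, ?_, ?_⟩
    · rw [hgw]
      exact ENNReal.mul_lt_top ENNReal.ofReal_lt_top hufin
    · filter_upwards [hu0] with x hx h
      simp [hwdef, hx h]
  have hsp : ∫ x in Ω, m x * |w x| ^ p = 1 := by
    have h1 : (∫ x in Ω, m x * |w x| ^ p) = ∫ x in Ω, c ^ p * (m x * |u x| ^ p) := by
      congr 1; funext x
      show m x * |c * u x| ^ p = _
      rw [show c * u x = c * u x - c * 0 by ring, hptw]
      ring_nf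
    rw [h1, integral_const_mul, hcp, ← hIdef, inv_mul_cancel₀ hIpos.ne']
  have hEw : energyP N s p w = lam := by
    show (gagP N s p w).toReal = lam
    rw [hgw, ENNReal.toReal_mul, ENNReal.toReal_ofReal (by positivity)]
    have : (gagP N s p u).toReal = energyP N s p u := rfl
    rw [this, hmain, hcp]
    field_simp
  have hbdd : BddBelow {t | ∃ v, sphereW N s p Ω m v ∧ t = energyP N s p v} := by
    refine ⟨0, fun t ht => ?_⟩
    obtain ⟨v, _, rfl⟩ := ht
    exact ENNReal.toReal_nonneg
  have hmem : lam ∈ {t | ∃ v, sphereW N s p Ω m v ∧ t = energyP N s p v} :=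
    ⟨w, ⟨hwW, hsp⟩, hEw.symm⟩
  exact csInf_le hbdd hmem
end
end

section
/- Let u ∈ W^{s,p}_0(Ω) be such that both u⁺ = max{u,0} and u⁻ = max{−u,0} are nonzero on sets of positive Lebesgue measure. Then [|u|]_{s,p}^p < [u]_{s,p}^p, i.e. the Gagliardo energy of |u| is strictly smaller than that of u. -/
open MeasureTheory ENNReal Filter Topology Metric

noncomputable section

theorem stmt10 (N : ℕ) (hN : 2 ≤ N) (s p : ℝ) (hp : 1 < p) (hs0 : 0 < s) (hs1 : s < 1)
    (hps : p * s < N) (Ω : Set (EN N)) (hΩo : IsOpen Ω) (hΩb : Bornology.IsBounded Ω)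
    (u : EN N → ℝ) (hu : memW N s p Ω u)
    (hpos : 0 < volume {x : EN N | 0 < u x}) (hneg : 0 < volume {x : EN N | u x < 0}) :
    energyP N s p (fun x => |u x|) < energyP N s p u := by
  obtain ⟨hmem, hfin, -⟩ := hu
  obtain ⟨g, hgsm, hug⟩ := hmem.1
  have hgm : Measurable g := hgsm.measurable
  set c : ℝ := (N : ℝ) + p * s with hc
  have hp0 : (0 : ℝ) < p := by linarith
  set Z : Set (EN N) := {x | u x ≠ g x} with hZ
  have hZ0 : volume Z = 0 := ae_iff.mp hug
  have hvolprod : (volume : Measure (EN N × EN N)) = (volume : Measure (EN N)).prod volume :=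
    rfl
  have e1 : ∀ᵐ z : EN N × EN N, u z.1 = g z.1 := by
    rw [ae_iff]
    have hset : {z : EN N × EN N | ¬ u z.1 = g z.1} = Z ×ˢ Set.univ := by
      ext z; simp [hZ, Set.mem_prod]
    rw [hset, hvolprod, Measure.prod_prod, hZ0, zero_mul]
  have e2 : ∀ᵐ z : EN N × EN N, u z.2 = g z.2 := by
    rw [ae_iff]
    have hset : {z : EN N × EN N | ¬ u z.2 = g z.2} = Set.univ ×ˢ Z := by
      ext z; simp [hZ, Set.mem_prod]
    rw [hset, hvolprod, Measure.prod_prod, hZ0, mul_zero]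
  set d : EN N × EN N → ℝ := fun z => ‖z.1 - z.2‖ ^ c with hdd
  set f : EN N × EN N → ℝ≥0∞ :=
    fun z => ENNReal.ofReal (|(|g z.1| - |g z.2|)| ^ p / d z) with hf
  set h : EN N × EN N → ℝ≥0∞ :=
    fun z => ENNReal.ofReal (|g z.1 - g z.2| ^ p / d z) with hh
  have hg1 : gagP N s p u = ∫⁻ z, h z := by
    refine lintegral_congr_ae ?_
    filter_upwards [e1, e2] with z h1 h2
    rw [hh]; simp only [h1, h2]; rfl
  have hg2 : gagP N s p (fun x => |u x|) = ∫⁻ z, f z := by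
    refine lintegral_congr_ae ?_
    filter_upwards [e1, e2] with z h1 h2
    rw [hf]; simp only [h1, h2]; rfl
  have hc0 : (0 : ℝ) < c := by positivity
  have hrp : Measurable fun x : ℝ => x ^ p := (Real.continuous_rpow_const hp0.le).measurable
  have hrc : Measurable fun x : ℝ => x ^ c := (Real.continuous_rpow_const hc0.le).measurable
  have hdm : Measurable d := hrc.comp ((measurable_fst.sub measurable_snd).norm)
  have hFm : Measurable f := by
    apply ENNReal.measurable_ofReal.comp
    exact (hrp.comp ((hgm.comp measurable_fst).abs.sub
      (hgm.comp measurable_snd).abs).abs).div hdm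
  have hHm : Measurable h := by
    apply ENNReal.measurable_ofReal.comp
    exact (hrp.comp ((hgm.comp measurable_fst).sub
      (hgm.comp measurable_snd)).abs).div hdm
  have hdnn : ∀ z, 0 ≤ d z := fun z => Real.rpow_nonneg (norm_nonneg _) c
  have hle : ∀ z, f z ≤ h z := by
    intro z
    apply ENNReal.ofReal_le_ofReal
    exact div_le_div_of_nonneg_right (Real.rpow_le_rpow (abs_nonneg _) (abs_abs_sub_abs_le_abs_sub _ _) hp0.le) (hdnn z)
  set A : Set (EN N) := {x | 0 < g x} with hA
  set B : Set (EN N) := {x | g x < 0} with hB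
  have hApos : 0 < volume A := by
    have hsub : {x : EN N | 0 < u x} ⊆ A ∪ Z := by
      intro x hx
      by_cases hxz : u x = g x
      · left; rw [hA]; simp only [Set.mem_setOf_eq, ← hxz]; exact hx
      · right; exact hxz
    calc 0 < volume {x : EN N | 0 < u x} := hpos
      _ ≤ volume (A ∪ Z) := measure_mono hsub
      _ ≤ volume A + volume Z := measure_union_le _ _
      _ = volume A := by rw [hZ0, add_zero]
  have hBpos : 0 < volume B := by
    have hsub : {x : EN N | u x < 0} ⊆ B ∪ Z := by
      intro x hx
      by_cases hxz : u x = g x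
      · left; rw [hB]; simp only [Set.mem_setOf_eq, ← hxz]; exact hx
      · right; exact hxz
    calc 0 < volume {x : EN N | u x < 0} := hneg
      _ ≤ volume (B ∪ Z) := measure_mono hsub
      _ ≤ volume B + volume Z := measure_union_le _ _
      _ = volume B := by rw [hZ0, add_zero]
  have hABpos : 0 < volume (A ×ˢ B) := by
    rw [hvolprod, Measure.prod_prod]
    exact ENNReal.mul_pos hApos.ne' hBpos.ne'
  have hstrict : ∀ z ∈ A ×ˢ B, f z < h z := by
    rintro z ⟨hz1, hz2⟩
    have ha : 0 < g z.1 := hz1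
    have hb : g z.2 < 0 := hz2
    have hdz : 0 < d z := by
      apply Real.rpow_pos_of_pos
      rw [norm_pos_iff, sub_ne_zero]
      intro hzz
      rw [hzz] at ha; exact absurd hb (not_lt.mpr ha.le)
    have hnum : |(|g z.1| - |g z.2|)| ^ p < |g z.1 - g z.2| ^ p := by
      apply Real.rpow_lt_rpow (abs_nonneg _) ?_ hp0
      rw [abs_of_pos ha, abs_of_neg hb, sub_neg_eq_add,
        abs_of_pos (show 0 < g z.1 - g z.2 by linarith), abs_lt]
      constructor <;> linarith
    rw [hf, hh, ENNReal.ofReal_lt_ofReal_iff_of_nonneg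
      (div_nonneg (Real.rpow_nonneg (abs_nonneg _) p) (hdnn z))]
    exact (div_lt_div_iff_of_pos_right hdz).mpr hnum
  have hIh : ∫⁻ z, h z ≠ ⊤ := by rw [← hg1]; exact hfin.ne
  have hIf : ∫⁻ z, f z ≠ ⊤ := ne_top_of_le_ne_top hIh (lintegral_mono hle)
  have hsplit : ∫⁻ z, h z = (∫⁻ z, f z) + ∫⁻ z, (h z - f z) := by
    rw [← lintegral_add_left hFm]
    exact lintegral_congr fun z => (add_tsub_cancel_of_le (hle z)).symm
  have hposint : 0 < ∫⁻ z, (h z - f z) := by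
    refine (lintegral_pos_iff_support (hHm.sub hFm)).mpr ?_
    refine lt_of_lt_of_le hABpos (measure_mono ?_)
    intro z hz
    exact (tsub_pos_of_lt (hstrict z hz)).ne'
  have hmain : ∫⁻ z, f z < ∫⁻ z, h z := by
    rw [hsplit]
    exact ENNReal.lt_add_right hIf hposint.ne'
  have h2 : gagP N s p (fun x => |u x|) < gagP N s p u := by
    rw [hg1, hg2]; exact hmain
  unfold energyP
  rw [ENNReal.toReal_lt_toReal (by rw [hg2]; exact hIf) hfin.ne]
  exact h2
end
end

section
/- Let p > 1 and ε > 0 be real numbers, and let a, b, c, d be real numbers with 0 ≤ a ≤ 1/ε, 0 ≤ b ≤ 1/ε, c ≥ 0, d ≥ 0. Then |a^p/(c+ε)^{p−1} − b^p/(d+ε)^{p−1}| ≤ (p/ε^{2p−2})|a−b| + ((p−1)/ε^{2p})|c−d|. -/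
open MeasureTheory ENNReal Filter Topology Metric

noncomputable section

lemma lip_pow (q M x y : ℝ) (hq : 1 ≤ q) (hx : 0 ≤ x) (hx' : x ≤ M) (hy : 0 ≤ y) (hy' : y ≤ M) :
    |x ^ q - y ^ q| ≤ q * M ^ (q - 1) * |x - y| := by
  have hM : 0 ≤ M := le_trans hx hx'
  have := Convex.norm_image_sub_le_of_norm_hasDerivWithin_le
    (f := fun t : ℝ => t ^ q) (f' := fun t : ℝ => q * t ^ (q - 1)) (s := Set.Icc 0 M) (C := q * M ^ (q - 1))
    (fun t ht => (Real.hasDerivAt_rpow_const (Or.inr hq)).hasDerivWithinAt)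
    (fun t ht => by
      rw [Real.norm_eq_abs, abs_mul, abs_of_nonneg (by linarith : (0:ℝ) ≤ q),
        abs_of_nonneg (Real.rpow_nonneg ht.1 _)]
      exact mul_le_mul_of_nonneg_left (Real.rpow_le_rpow ht.1 ht.2 (by linarith)) (by linarith))
    (convex_Icc 0 M) ⟨hy, hy'⟩ ⟨hx, hx'⟩
  simpa [Real.norm_eq_abs] using this

lemma lip_inv_pow (q e x y : ℝ) (hq : 0 < q) (he : 0 < e) (hx : e ≤ x) (hy : e ≤ y) :
    |x ^ (-q) - y ^ (-q)| ≤ q * e ^ (-q - 1) * |x - y| := by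
  have := Convex.norm_image_sub_le_of_norm_hasDerivWithin_le
    (f := fun t : ℝ => t ^ (-q)) (f' := fun t : ℝ => -q * t ^ (-q - 1)) (s := Set.Ici e)
    (C := q * e ^ (-q - 1))
    (fun t ht => (Real.hasDerivAt_rpow_const (Or.inl (by
      have : (0:ℝ) < t := lt_of_lt_of_le he ht
      exact ne_of_gt this))).hasDerivWithinAt)
    (fun t ht => by
      have ht0 : (0:ℝ) < t := lt_of_lt_of_le he ht
      rw [Real.norm_eq_abs, abs_mul, abs_neg, abs_of_nonneg hq.le,
        abs_of_nonneg (Real.rpow_nonneg ht0.le _)]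
      exact mul_le_mul_of_nonneg_left
        (Real.rpow_le_rpow_of_nonpos he ht (by linarith)) hq.le)
    (convex_Ici e) hy hx
  simpa [Real.norm_eq_abs] using this

theorem stmt11 (p ε a b c d : ℝ) (hp : 1 < p) (hε : 0 < ε)
    (ha0 : 0 ≤ a) (ha1 : a ≤ 1 / ε) (hb0 : 0 ≤ b) (hb1 : b ≤ 1 / ε)
    (hc : 0 ≤ c) (hd : 0 ≤ d) :
    |a ^ p / (c + ε) ^ (p - 1) - b ^ p / (d + ε) ^ (p - 1)| ≤
      p / ε ^ (2 * p - 2) * |a - b| + (p - 1) / ε ^ (2 * p) * |c - d| := by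
  have hcε : (0:ℝ) < c + ε := by linarith
  have hdε : (0:ℝ) < d + ε := by linarith
  -- rewrite divisions as multiplications by negative powers
  have rw1 : a ^ p / (c + ε) ^ (p - 1) = a ^ p * (c + ε) ^ (-(p - 1)) := by
    rw [Real.rpow_neg hcε.le, div_eq_mul_inv]
  have rw2 : b ^ p / (d + ε) ^ (p - 1) = b ^ p * (d + ε) ^ (-(p - 1)) := by
    rw [Real.rpow_neg hdε.le, div_eq_mul_inv]
  set X := (c + ε) ^ (-(p - 1)) with hX
  set Y := (d + ε) ^ (-(p - 1)) with hY
  have hX0 : 0 ≤ X := Real.rpow_nonneg hcε.le _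
  -- triangle inequality split
  have split : |a ^ p / (c + ε) ^ (p - 1) - b ^ p / (d + ε) ^ (p - 1)| ≤
      |a ^ p - b ^ p| * X + b ^ p * |X - Y| := by
    rw [rw1, rw2]
    have : a ^ p * X - b ^ p * Y = (a ^ p - b ^ p) * X + b ^ p * (X - Y) := by ring
    rw [this]
    calc |(a ^ p - b ^ p) * X + b ^ p * (X - Y)|
        ≤ |(a ^ p - b ^ p) * X| + |b ^ p * (X - Y)| := abs_add_le _ _
      _ = |a ^ p - b ^ p| * X + b ^ p * |X - Y| := by
          rw [abs_mul, abs_mul, abs_of_nonneg hX0, abs_of_nonneg (Real.rpow_nonneg hb0 _)]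
  -- bounds
  have h1 : |a ^ p - b ^ p| ≤ p * (1 / ε) ^ (p - 1) * |a - b| :=
    lip_pow p (1 / ε) a b hp.le ha0 ha1 hb0 hb1
  have hXe : X ≤ ε ^ (-(p - 1)) :=
    Real.rpow_le_rpow_of_nonpos hε (by linarith) (by linarith)
  have hbp : b ^ p ≤ (1 / ε) ^ p := Real.rpow_le_rpow hb0 hb1 (by linarith)
  have h2 : |X - Y| ≤ (p - 1) * ε ^ (-(p - 1) - 1) * |c - d| := by
    have h := lip_inv_pow (p - 1) ε (c + ε) (d + ε) (by linarith) hε (by linarith) (by linarith)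
    rwa [show c + ε - (d + ε) = c - d by ring] at h
  have habs1 : 0 ≤ |a ^ p - b ^ p| := abs_nonneg _
  have hεinv : (0:ℝ) ≤ (1 / ε) := by positivity
  have main : |a ^ p / (c + ε) ^ (p - 1) - b ^ p / (d + ε) ^ (p - 1)| ≤
      p * (1 / ε) ^ (p - 1) * |a - b| * ε ^ (-(p - 1)) +
      (1 / ε) ^ p * ((p - 1) * ε ^ (-(p - 1) - 1) * |c - d|) := by
    refine le_trans split (add_le_add ?_ ?_)
    · calc |a ^ p - b ^ p| * X ≤ (p * (1 / ε) ^ (p - 1) * |a - b|) * ε ^ (-(p - 1)) := by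
            apply mul_le_mul h1 hXe hX0
            positivity
        _ = p * (1 / ε) ^ (p - 1) * |a - b| * ε ^ (-(p - 1)) := by ring
    · exact mul_le_mul hbp h2 (abs_nonneg _) (by positivity)
  refine le_trans main (le_of_eq ?_)
  rw [one_div, Real.inv_rpow hε.le, Real.inv_rpow hε.le, ← Real.rpow_neg hε.le,
    ← Real.rpow_neg hε.le, div_eq_mul_inv, div_eq_mul_inv, ← Real.rpow_neg hε.le,
    ← Real.rpow_neg hε.le]
  rw [show p * ε ^ (-(p - 1)) * |a - b| * ε ^ (-(p - 1)) =
      p * (ε ^ (-(p - 1)) * ε ^ (-(p - 1))) * |a - b| by ring,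
    ← Real.rpow_add hε,
    show ε ^ (-p) * ((p - 1) * ε ^ (-(p - 1) - 1) * |c - d|) =
      (p - 1) * (ε ^ (-p) * ε ^ (-(p - 1) - 1)) * |c - d| by ring,
    ← Real.rpow_add hε]
  rw [show -(p - 1) + -(p - 1) = -(2 * p - 2) by ring,
    show -p + (-(p - 1) - 1) = -(2 * p) by ring]
end
end

section
/- Let m ∈ 𝒲_{s,p}, let λ > 0 be an eigenvalue of the weighted fractional p-Laplacian Dirichlet problem, and let u be a λ-eigenfunction. If u⁺ = max{u,0} is nonzero on a set of positive measure, then ∫_Ω m(x)(u⁺)^p dx > 0; and if u⁻ = max{−u,0} is nonzero on a set of positive measure, then ∫_Ω m(x)(u⁻)^p dx > 0. -/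
open MeasureTheory ENNReal Filter Topology Metric

noncomputable section

/-! ### Auxiliary lemmas -/

lemma measurable_rpow_const' (q : ℝ) : Measurable fun x : ℝ => x ^ q := by
  apply measurable_of_continuousOn_compl_singleton (0 : ℝ)
  intro x hx
  exact (Real.continuousAt_rpow_const x q (Or.inl hx)).continuousWithinAt

lemma div_mono_nonneg {a b c : ℝ} (h : a ≤ b) (hc : 0 ≤ c) : a / c ≤ b / c :=
  div_le_div_of_nonneg_right h hc

/-- The key sign inequality `|a⁺ - c⁺|^p ≤ |a-c|^{p-2} (a-c) (a⁺ - c⁺)`. -/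
lemma keyIneq {p : ℝ} (hp : 1 < p) (a c : ℝ) :
    |max a 0 - max c 0| ^ p ≤ |a - c| ^ (p - 2) * (a - c) * (max a 0 - max c 0) := by
  set d := a - c with hd
  set e := max a 0 - max c 0 with he
  have hle : |e| ≤ |d| := abs_max_sub_max_le_abs a c 0
  have hde : 0 ≤ d * e := by
    rcases le_total a c with h | h
    · refine mul_nonneg_iff.mpr (Or.inr ⟨sub_nonpos.mpr h, sub_nonpos.mpr ?_⟩)
      exact max_le_max h le_rfl
    · refine mul_nonneg (sub_nonneg.mpr h) (sub_nonneg.mpr ?_)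
      exact max_le_max h le_rfl
  by_cases he0 : e = 0
  · rw [he0, abs_zero, Real.zero_rpow (by positivity), mul_zero]
  have hd0 : d ≠ 0 := by
    intro h; apply he0
    have := hle; rw [h, abs_zero] at this
    exact abs_eq_zero.mp (le_antisymm this (abs_nonneg _))
  have hed : |d| ^ (p - 2) * d * e = |d| ^ (p - 2) * |d| * |e| := by
    rw [mul_assoc, mul_assoc]
    congr 1
    rw [← abs_mul, abs_of_nonneg hde]
  rw [hed]
  have h1 : |e| ^ p = |e| ^ (p - 1) * |e| := by
    rw [← Real.rpow_add_one (abs_ne_zero.mpr he0), show p - 1 + 1 = p by ring]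
  have h2 : |d| ^ (p - 2) * |d| = |d| ^ (p - 1) := by
    rw [← Real.rpow_add_one (abs_ne_zero.mpr hd0), show p - 2 + 1 = p - 1 by ring]
  rw [h1, h2]
  exact mul_le_mul_of_nonneg_right
    (Real.rpow_le_rpow (abs_nonneg _) hle (by linarith)) (abs_nonneg _)

/-- Bound for the absolute value of the numerator. -/
lemma numBound {p : ℝ} (hp : 1 < p) (a c av cv : ℝ) (hle : |av - cv| ≤ |a - c|) :
    |(|a - c| ^ (p - 2) * (a - c) * (av - cv))| ≤ |a - c| ^ p := by
  by_cases hd : a - c = 0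
  · rw [hd]; simp; positivity
  have : |(|a - c| ^ (p - 2) * (a - c) * (av - cv))| =
      |a - c| ^ (p - 2) * |a - c| * |av - cv| := by
    rw [abs_mul, abs_mul, abs_of_nonneg (Real.rpow_nonneg (abs_nonneg _) _)]
  rw [this]
  have h2 : |a - c| ^ (p - 2) * |a - c| = |a - c| ^ (p - 1) := by
    rw [← Real.rpow_add_one (abs_ne_zero.mpr hd), show p - 2 + 1 = p - 1 by ring]
  have h3 : |a - c| ^ (p - 1) * |a - c| = |a - c| ^ p := by
    rw [← Real.rpow_add_one (abs_ne_zero.mpr hd), show p - 1 + 1 = p by ring]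
  rw [h2, ← h3]
  exact mul_le_mul_of_nonneg_left hle (Real.rpow_nonneg (abs_nonneg _) _)

/-- Pointwise computation of the right-hand side integrand with `v = u⁺`. -/
lemma rhsPtwise {p : ℝ} (hp : 1 < p) (M a : ℝ) :
    M * |a| ^ (p - 2) * a * max a 0 = M * max a 0 ^ p := by
  rcases lt_trichotomy a 0 with h | h | h
  · rw [max_eq_right h.le, Real.zero_rpow (by positivity), mul_zero, mul_zero]
  · simp [h, Real.zero_rpow (show p ≠ 0 by positivity)]
  · have key : a ^ (p - 2) * a * a = a ^ p := by
      rw [← Real.rpow_add_one h.ne', ← Real.rpow_add_one h.ne',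
        show p - 2 + 1 + 1 = p by ring]
    rw [max_eq_left h.le, abs_of_pos h, ← key]; ring

/-- The main lemma: positivity of `∫ m (u⁺)^p` for an eigenfunction whose positive
part has positive support. -/
lemma keyLemma (N : ℕ) (hN : 1 ≤ N) (s p : ℝ) (hp : 1 < p) (hs0 : 0 < s)
    (Ω : Set (EN N)) (hΩo : IsOpen Ω) (hΩb : Bornology.IsBounded Ω)
    (m : EN N → ℝ) (lam : ℝ) (hlam : 0 < lam)
    (u : EN N → ℝ) (hu : isEigenfunc N s p Ω m lam u)
    (hpos : 0 < volume {x : EN N | 0 < u x}) :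
    0 < ∫ x in Ω, m x * (max (u x) 0) ^ p := by
  obtain ⟨⟨hLp, hgag, hzero⟩, hne, heq⟩ := hu
  set v : EN N → ℝ := fun x => max (u x) 0 with hvdef
  have hp0 : (0 : ℝ) < p := by linarith
  -- the kernel
  set K : EN N × EN N → ℝ := fun z => ‖z.1 - z.2‖ ^ ((N : ℝ) + p * s) with hKdef
  have hK0 : ∀ z, 0 ≤ K z := fun z => Real.rpow_nonneg (norm_nonneg _) _
  have hdiff_le : ∀ x y : EN N, |v x - v y| ≤ |u x - u y| := fun x y =>
    abs_max_sub_max_le_abs _ _ _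
  -- v ∈ W^{s,p}_0
  have hvW : memW N s p Ω v := by
    refine ⟨hLp.pos_part, ?_, ?_⟩
    · refine lt_of_le_of_lt (lintegral_mono fun z => ?_) hgag
      exact ENNReal.ofReal_le_ofReal (div_mono_nonneg
        (Real.rpow_le_rpow (abs_nonneg _) (hdiff_le _ _) hp0.le) (hK0 z))
    · filter_upwards [hzero] with x hx hxΩ
      simp [hvdef, hx hxΩ]
  have heqv := heq v hvW
  -- integrands
  set g : EN N × EN N → ℝ := fun z =>
    |u z.1 - u z.2| ^ (p - 2) * (u z.1 - u z.2) * (v z.1 - v z.2) /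
      ‖z.1 - z.2‖ ^ ((N : ℝ) + p * s) with hgdef
  set h : EN N × EN N → ℝ := fun z =>
    |v z.1 - v z.2| ^ p / ‖z.1 - z.2‖ ^ ((N : ℝ) + p * s) with hhdef
  -- measurability
  have hqfst : Measure.QuasiMeasurePreserving (Prod.fst : EN N × EN N → EN N)
      volume volume := by
    rw [Measure.volume_eq_prod]; exact Measure.quasiMeasurePreserving_fst
  have hqsnd : Measure.QuasiMeasurePreserving (Prod.snd : EN N × EN N → EN N)
      volume volume := by
    rw [Measure.volume_eq_prod]; exact Measure.quasiMeasurePreserving_snd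
  have hum : AEMeasurable u (volume : Measure (EN N)) :=
    hLp.aestronglyMeasurable.aemeasurable
  have hvm : AEMeasurable v (volume : Measure (EN N)) :=
    hvW.1.aestronglyMeasurable.aemeasurable
  have hu1 : AEMeasurable (fun z : EN N × EN N => u z.1) volume :=
    hum.comp_quasiMeasurePreserving hqfst
  have hu2 : AEMeasurable (fun z : EN N × EN N => u z.2) volume :=
    hum.comp_quasiMeasurePreserving hqsnd
  have hv1 : AEMeasurable (fun z : EN N × EN N => v z.1) volume :=
    hvm.comp_quasiMeasurePreserving hqfst
  have hv2 : AEMeasurable (fun z : EN N × EN N => v z.2) volume :=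
    hvm.comp_quasiMeasurePreserving hqsnd
  have hdu : AEMeasurable (fun z : EN N × EN N => u z.1 - u z.2) volume := hu1.sub hu2
  have hdv : AEMeasurable (fun z : EN N × EN N => v z.1 - v z.2) volume := hv1.sub hv2
  have habs : AEMeasurable (fun z : EN N × EN N => |u z.1 - u z.2|) volume :=
    continuous_abs.measurable.comp_aemeasurable hdu
  have habsv : AEMeasurable (fun z : EN N × EN N => |v z.1 - v z.2|) volume :=
    continuous_abs.measurable.comp_aemeasurable hdv
  have hKm : Measurable K :=
    (measurable_rpow_const' _).comp (measurable_fst.sub measurable_snd).norm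
  have hgm : AEMeasurable g volume := by
    exact ((((measurable_rpow_const' (p - 2)).comp_aemeasurable habs).mul hdu).mul
      hdv).div hKm.aemeasurable
  have hhm : AEMeasurable h volume := by
    exact ((measurable_rpow_const' p).comp_aemeasurable habsv).div hKm.aemeasurable
  -- integrability of g
  have hgabs : ∀ z, ‖g z‖ ≤ |u z.1 - u z.2| ^ p / K z := by
    intro z
    rw [hgdef]
    simp only [Real.norm_eq_abs, abs_div, abs_of_nonneg (hK0 z)]
    rw [abs_of_nonneg (Real.rpow_nonneg (norm_nonneg (z.1 - z.2)) _)]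
    exact div_mono_nonneg (numBound hp _ _ _ _ (hdiff_le _ _)) (hK0 z)
  have hgInt : Integrable g volume := by
    refine ⟨hgm.aestronglyMeasurable, ?_⟩
    rw [hasFiniteIntegral_iff_norm]
    refine lt_of_le_of_lt (lintegral_mono fun z => ?_) hgag
    exact ENNReal.ofReal_le_ofReal (hgabs z)
  -- integrability of h
  have hhInt : Integrable h volume := by
    refine ⟨hhm.aestronglyMeasurable, ?_⟩
    rw [hasFiniteIntegral_iff_norm]
    refine lt_of_le_of_lt (lintegral_mono fun z => ?_) hvW.2.1
    refine ENNReal.ofReal_le_ofReal ?_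
    rw [hhdef]
    simp only [Real.norm_eq_abs, abs_div, abs_of_nonneg (hK0 z),
      abs_of_nonneg (Real.rpow_nonneg (abs_nonneg _) _)]
    exact le_of_eq (by rw [abs_of_nonneg (Real.rpow_nonneg (norm_nonneg (z.1 - z.2)) _)])
  -- h ≤ g pointwise
  have hhg : h ≤ g := by
    intro z
    exact div_mono_nonneg (keyIneq hp (u z.1) (u z.2)) (hK0 z)
  have hh0 : ∀ z, 0 ≤ h z := fun z =>
    div_nonneg (Real.rpow_nonneg (abs_nonneg _) _) (hK0 z)
  -- positivity of ∫ h
  have hhpos : 0 < ∫ z, h z := by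
    rw [integral_pos_iff_support_of_nonneg_ae (ae_of_all _ hh0) hhInt]
    -- find a ball disjoint from Ω where u vanishes
    obtain ⟨r, hr⟩ := hΩb.subset_closedBall 0
    have hNne : Nonempty (Fin N) := ⟨⟨0, hN⟩⟩
    set c : EN N := EuclideanSpace.single (Classical.arbitrary (Fin N)) (|r| + 2) with hcdef
    have hcnorm : ‖c‖ = |r| + 2 := by
      rw [hcdef, EuclideanSpace.norm_single]
      rw [Real.norm_eq_abs, abs_of_nonneg (by positivity)]
    have hball : ∀ y ∈ ball c 1, y ∉ Ω := by
      intro y hy hyΩ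
      have h1 : ‖y - c‖ < 1 := by rwa [← dist_eq_norm, ← mem_ball]
      have h2 : ‖y‖ ≤ r := by
        have := hr hyΩ
        rwa [mem_closedBall, dist_zero_right] at this
      have : ‖c‖ ≤ ‖y‖ + ‖y - c‖ := by
        calc ‖c‖ = ‖y - (y - c)‖ := by congr 1; abel
        _ ≤ ‖y‖ + ‖y - c‖ := norm_sub_le _ _
      have hrabs : r ≤ |r| := le_abs_self r
      rw [hcnorm] at this
      linarith
    have hEnull : volume {x : EN N | ¬(x ∉ Ω → u x = 0)} = 0 := hzero
    obtain ⟨T, hTsub, hTmeas, hT0⟩ := exists_measurable_superset_of_null hEnull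
    have hsupp : ({x : EN N | 0 < u x} ×ˢ (ball c 1 \ T)) ⊆ Function.support h := by
      rintro ⟨x, y⟩ ⟨hx, hy⟩
      have hux : 0 < u x := hx
      have huy : u y = 0 := by
        by_contra huy
        exact hy.2 (hTsub (by simp only [Set.mem_setOf_eq]; intro hcon; exact huy (hcon (hball y hy.1))))
      have hvx : v x = u x := max_eq_left hux.le
      have hvy : v y = 0 := by rw [hvdef]; simp [huy]
      have hxy : x ≠ y := by intro hcon; rw [hcon, huy] at hux; exact lt_irrefl _ hux
      have hnum : 0 < |v x - v y| ^ p := by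
        apply Real.rpow_pos_of_pos
        rw [hvx, hvy, sub_zero, abs_of_pos hux]; exact hux
      have hden : 0 < ‖(x, y).1 - (x, y).2‖ ^ ((N : ℝ) + p * s) := by
        apply Real.rpow_pos_of_pos
        rw [norm_pos_iff, sub_ne_zero]; exact hxy
      exact ne_of_gt (div_pos hnum hden)
    refine lt_of_lt_of_le ?_ (measure_mono hsupp)
    rw [Measure.volume_eq_prod, Measure.prod_prod]
    have hball_pos : 0 < volume (ball c 1 \ T) := by
      rw [measure_diff_null hT0]
      exact measure_ball_pos volume c one_pos
    exact ENNReal.mul_pos hpos.ne' hball_pos.ne'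
  -- conclude
  have hgpos : 0 < ∫ z, g z := lt_of_lt_of_le hhpos (integral_mono hhInt hgInt hhg)
  rw [hgdef] at hgpos
  rw [heqv] at hgpos
  have hI : (∫ x in Ω, m x * |u x| ^ (p - 2) * u x * v x)
      = ∫ x in Ω, m x * max (u x) 0 ^ p := by
    refine integral_congr_ae (ae_of_all _ fun x => ?_)
    rw [hvdef]
    exact rhsPtwise hp (m x) (u x)
  rw [hI] at hgpos
  by_contra hcon
  push_neg at hcon
  nlinarith

/-- Negation of an eigenfunction is an eigenfunction. -/
lemma eigen_neg (N : ℕ) (s p : ℝ) (Ω : Set (EN N)) (m : EN N → ℝ) (lam : ℝ)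
    (u : EN N → ℝ) (hu : isEigenfunc N s p Ω m lam u) :
    isEigenfunc N s p Ω m lam (fun x => -u x) := by
  obtain ⟨⟨hLp, hgag, hzero⟩, hne, heq⟩ := hu
  have hgag' : gagP N s p (fun x => -u x) = gagP N s p u := by
    unfold gagP
    refine lintegral_congr fun z => ?_
    rw [show -u z.1 - -u z.2 = -(u z.1 - u z.2) by ring, abs_neg]
  refine ⟨⟨hLp.neg, by rw [hgag']; exact hgag, ?_⟩, ?_, ?_⟩
  · filter_upwards [hzero] with x hx hxΩ
    simp [hx hxΩ]
  · intro hcon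
    apply hne
    filter_upwards [hcon] with x hx
    simpa using hx
  · intro v hv
    have lhs_eq : (fun z : EN N × EN N =>
        |-u z.1 - -u z.2| ^ (p - 2) * (-u z.1 - -u z.2) * (v z.1 - v z.2) /
          ‖z.1 - z.2‖ ^ ((N : ℝ) + p * s)) =
        fun z => -(|u z.1 - u z.2| ^ (p - 2) * (u z.1 - u z.2) * (v z.1 - v z.2) /
          ‖z.1 - z.2‖ ^ ((N : ℝ) + p * s)) := by
      funext z
      rw [show -u z.1 - -u z.2 = -(u z.1 - u z.2) by ring, abs_neg]
      ring
    have rhs_eq : (fun x => m x * |-u x| ^ (p - 2) * -u x * v x) =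
        fun x => -(m x * |u x| ^ (p - 2) * u x * v x) := by
      funext x; rw [abs_neg]; ring
    show (∫ z : EN N × EN N,
        |-u z.1 - -u z.2| ^ (p - 2) * (-u z.1 - -u z.2) * (v z.1 - v z.2) /
          ‖z.1 - z.2‖ ^ ((N : ℝ) + p * s))
      = lam * ∫ x in Ω, m x * |-u x| ^ (p - 2) * -u x * v x
    rw [lhs_eq, rhs_eq, integral_neg, integral_neg, heq v hv]
    ring

theorem stmt12 (N : ℕ) (hN : 2 ≤ N) (s p : ℝ) (hp : 1 < p) (hs0 : 0 < s) (hs1 : s < 1)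
    (hps : p * s < N) (Ω : Set (EN N)) (hΩo : IsOpen Ω) (hΩb : Bornology.IsBounded Ω)
    (m : EN N → ℝ) (hm : memWeight N s p Ω m)
    (lam : ℝ) (hlam : 0 < lam)
    (u : EN N → ℝ) (hu : isEigenfunc N s p Ω m lam u) :
    (0 < volume {x : EN N | 0 < u x} → 0 < ∫ x in Ω, m x * (max (u x) 0) ^ p) ∧
    (0 < volume {x : EN N | u x < 0} → 0 < ∫ x in Ω, m x * (max (-u x) 0) ^ p) := by
  have hN1 : 1 ≤ N := by omega
  constructor
  · intro hpos
    exact keyLemma N hN1 s p hp hs0 Ω hΩo hΩb m lam hlam u hu hpos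
  · intro hpos
    have hpos' : 0 < volume {x : EN N | 0 < -u x} := by
      have : {x : EN N | 0 < -u x} = {x : EN N | u x < 0} := by
        ext x; simp [neg_pos]
      rw [this]; exact hpos
    exact keyLemma N hN1 s p hp hs0 Ω hΩo hΩb m lam hlam (fun x => -u x)
      (eigen_neg N s p Ω m lam u hu) hpos'
end
end
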